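/- arXiv:1612.08244 — 3 statements merged into one kernel-verified Lean document; each statement's English description precedes it below -/
import Mathlib

section
/- Let L be a Leibniz algebra over a field 𝕜 with left center Z. The representable cochains form a subalgebra of C(L): if η ∈ C̃^m(L) and λ ∈ C̃^l(L) are representable, then their product η·λ ∈ C^{m+l}(L) is representable. -/
open scoped TensorProduct

universe u v w

/-- A (left) Leibniz algebra over a field `𝕜`. -/
structure LeibnizAlg (𝕜 : Type u) [Field 𝕜] (L : Type v) [AddCommGroup L] [Module 𝕜 L] where
  br : L →ₗ[𝕜] L →ₗ[𝕜] L
  leibniz : ∀ a b c : L, br a (br b c) = br (br a b) c + br b (br a c)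

namespace LeibnizAlg

variable {𝕜 : Type u} [Field 𝕜] {L : Type v} [AddCommGroup L] [Module 𝕜 L]
variable (A : LeibnizAlg 𝕜 L)

/-- The left center `Z = {z | z ∘ e = 0 for all e}`. -/
def leftCenter : Submodule 𝕜 L where
  carrier := {z | ∀ e : L, A.br z e = 0}
  add_mem' := by
    intro a b ha hb
    simp only [Set.mem_setOf_eq] at *
    intro e
    rw [map_add, LinearMap.add_apply, ha e, hb e, add_zero]
  zero_mem' := by
    simp only [Set.mem_setOf_eq]
    intro e
    rw [map_zero, LinearMap.zero_apply]
  smul_mem' := by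
    intro c x hx
    simp only [Set.mem_setOf_eq] at *
    intro e
    rw [map_smul, LinearMap.smul_apply, hx e, smul_zero]

lemma mem_leftCenter_iff {z : L} : z ∈ A.leftCenter ↔ ∀ e : L, A.br z e = 0 := Iff.rfl

/-- The symmetric product `(a,b) = a∘b + b∘a`. -/
def sp (a b : L) : L := A.br a b + A.br b a

lemma sp_mem (a b : L) : A.sp a b ∈ A.leftCenter := by
  rw [mem_leftCenter_iff]
  intro e
  have h1 := A.leibniz a b e
  have h2 := A.leibniz b a e
  have hx : A.br (A.br a b) e = A.br a (A.br b e) - A.br b (A.br a e) :=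
    eq_sub_iff_add_eq.mpr h1.symm
  have hy : A.br (A.br b a) e = A.br b (A.br a e) - A.br a (A.br b e) :=
    eq_sub_iff_add_eq.mpr h2.symm
  rw [sp, map_add, LinearMap.add_apply, hx, hy]
  abel

/-- The symmetric product, seen as valued in the left center. -/
def spZ (a b : L) : A.leftCenter := ⟨A.sp a b, A.sp_mem a b⟩

lemma br_mem (e : L) (f : A.leftCenter) : A.br e (f : L) ∈ A.leftCenter := by
  rw [mem_leftCenter_iff]
  intro e'
  have h := A.leibniz e (f : L) e'
  have hf : A.br (f : L) e' = 0 := (A.mem_leftCenter_iff.mp f.2) e'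
  have hf2 : A.br (f : L) (A.br e e') = 0 := (A.mem_leftCenter_iff.mp f.2) _
  rw [hf] at h
  rw [map_zero] at h
  rw [hf2, add_zero] at h
  exact h.symm

/-- The bracket of `L` on its left center. -/
def brZ (e : L) (f : A.leftCenter) : A.leftCenter := ⟨A.br e (f : L), A.br_mem e f⟩

/-- The symmetric product as a bilinear map into the left center. -/
noncomputable def spL : L →ₗ[𝕜] L →ₗ[𝕜] A.leftCenter :=
  LinearMap.mk₂ 𝕜 A.spZ
    (fun a a' b => Subtype.ext (by
      simp only [spZ, sp, map_add, LinearMap.add_apply, Submodule.coe_add]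
      abel))
    (fun c a b => Subtype.ext (by
      simp only [spZ, sp, map_smul, LinearMap.smul_apply, SetLike.val_smul, smul_add]))
    (fun a b b' => Subtype.ext (by
      simp only [spZ, sp, map_add, LinearMap.add_apply, Submodule.coe_add]
      abel))
    (fun c a b => Subtype.ext (by
      simp only [spZ, sp, map_smul, LinearMap.smul_apply, SetLike.val_smul, smul_add]))

end LeibnizAlg

/-- `(S, ι)` is (a model of) the symmetric algebra of the module `Z`:
it satisfies the universal property. -/
def IsSymAlg {𝕜 : Type u} [Field 𝕜] {Z : Type v} [AddCommGroup Z] [Module 𝕜 Z]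
    (S : Type w) [CommRing S] [Algebra 𝕜 S] (ι : Z →ₗ[𝕜] S) : Prop :=
  ∀ (B : Type (max u v w)) [CommRing B] [Algebra 𝕜 B] (g : Z →ₗ[𝕜] B),
    ∃! h : S →ₐ[𝕜] B, ∀ z : Z, h (ι z) = g z

section Shuffles

/-- All ways of splitting a list into a signed pair of complementary subsequences. -/
def shSplits {α : Type*} : List α → List (ℤ × List α × List α)
  | [] => [(1, [], [])]
  | a :: l =>
      ((shSplits l).map fun t => (t.1, a :: t.2.1, t.2.2)) ++
      ((shSplits l).map fun t => ((-1) ^ t.2.1.length * t.1, t.2.1, a :: t.2.2))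

/-- Signed sum over all `(p, l.length - p)`-shuffles of the list `l`. -/
def shSum {α : Type*} {S : Type*} [AddCommGroup S] (p : ℕ) (l : List α)
    (F : List α → List α → S) : S :=
  (((shSplits l).filter fun t => t.2.1.length == p).map fun t => t.1 • F t.2.1 t.2.2).sum

/-- Unsigned sum over all `(p, l.length - p)`-shuffles of the list `l`. -/
def shSumU {α : Type*} {S : Type*} [AddCommMonoid S] (p : ℕ) (l : List α)
    (F : List α → List α → S) : S :=
  (((shSplits l).filter fun t => t.2.1.length == p).map fun t => F t.2.1 t.2.2).sum

end Shuffles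

section Cochains

variable {𝕜 : Type u} [Field 𝕜] {L : Type v} [AddCommGroup L] [Module 𝕜 L]
variable (A : LeibnizAlg 𝕜 L)
variable (S : Type w) [CommRing S] [Algebra 𝕜 S]
variable (ι : A.leftCenter →ₗ[𝕜] S)

/-- `ω` is an `n`-cochain in the standard complex `C(L) = C(L, Z, S^•(Z))`:
its component `ω k`, defined on tuples `es` of `n - 2k` elements of `L` and `k`
elements of the left center, is multilinear, symmetric in the `Z`-arguments, and
weakly skew-symmetric in the `L`-arguments. -/
structure IsCochain (n : ℕ) (ω : ℕ → List L → List A.leftCenter → S) : Prop where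
  add_e : ∀ (k : ℕ) (p q : List L) (x y : L) (fs : List A.leftCenter),
    2*k + (p.length + 1 + q.length) = n → fs.length = k →
    ω k (p ++ (x + y) :: q) fs = ω k (p ++ x :: q) fs + ω k (p ++ y :: q) fs
  smul_e : ∀ (k : ℕ) (p q : List L) (c : 𝕜) (x : L) (fs : List A.leftCenter),
    2*k + (p.length + 1 + q.length) = n → fs.length = k →
    ω k (p ++ (c • x) :: q) fs = c • ω k (p ++ x :: q) fs
  add_f : ∀ (k : ℕ) (es : List L) (p q : List A.leftCenter) (x y : A.leftCenter),
    2*k + es.length = n → p.length + 1 + q.length = k →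
    ω k es (p ++ (x + y) :: q) = ω k es (p ++ x :: q) + ω k es (p ++ y :: q)
  smul_f : ∀ (k : ℕ) (es : List L) (p q : List A.leftCenter) (c : 𝕜) (x : A.leftCenter),
    2*k + es.length = n → p.length + 1 + q.length = k →
    ω k es (p ++ (c • x) :: q) = c • ω k es (p ++ x :: q)
  symm_f : ∀ (k : ℕ) (es : List L) (p q : List A.leftCenter) (x y : A.leftCenter),
    2*k + es.length = n → p.length + 2 + q.length = k →
    ω k es (p ++ x :: y :: q) = ω k es (p ++ y :: x :: q)
  skew : ∀ (k : ℕ) (p q : List L) (x y : L) (fs : List A.leftCenter),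
    2*k + (p.length + 2 + q.length) = n → fs.length = k →
    ω k (p ++ x :: y :: q) fs + ω k (p ++ y :: x :: q) fs
      = - ω (k+1) (p ++ q) (A.spZ x y :: fs)

/-- The product of an `n`-cochain and an `m`-cochain. -/
def cmul (n m : ℕ) (ω η : ℕ → List L → List A.leftCenter → S) :
    ℕ → List L → List A.leftCenter → S :=
  fun k es fs => ∑ i ∈ Finset.range (k+1),
    if 2*i ≤ n ∧ 2*(k-i) ≤ m then
      shSum (n - 2*i) es fun es₁ es₂ =>
        shSumU i fs fun fs₁ fs₂ => ω i es₁ fs₁ * η (k-i) es₂ fs₂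
    else 0

/-- The operator `d₀` of the standard complex, where `ρ` is the action of `L` on
`S^•(Z)` by derivations. -/
def cd0 (ρ : L → Derivation 𝕜 S S) (ω : ℕ → List L → List A.leftCenter → S) :
    ℕ → List L → List A.leftCenter → S :=
  fun k es fs =>
    (∑ a ∈ Finset.range es.length,
      (-1 : ℤ)^a • ρ (es.getD a 0) (ω k (es.eraseIdx a) fs))
    + ∑ a ∈ Finset.range es.length, ∑ b ∈ Finset.Ico (a+1) es.length,
        (-1 : ℤ)^(a+1) •
          ω k ((es.eraseIdx a).set (b-1) (A.br (es.getD a 0) (es.getD b 0))) fs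

/-- The operator `δ` of the standard complex. -/
def cdel (ω : ℕ → List L → List A.leftCenter → S) :
    ℕ → List L → List A.leftCenter → S :=
  fun k es fs => ∑ j ∈ Finset.range fs.length,
    ω (k-1) (((fs.getD j 0 : A.leftCenter) : L) :: es) (fs.eraseIdx j)

/-- The symmetric product with values pushed into `S = S^•(Z)`. -/
noncomputable def spS : L →ₗ[𝕜] L →ₗ[𝕜] S := (A.spL).compr₂ ι

/-- The `S^•(Z)`-bilinear extension of the symmetric product to `S^•(Z) ⊗ L`. -/
noncomputable def pairT : (S ⊗[𝕜] L) →ₗ[𝕜] (S ⊗[𝕜] L) →ₗ[𝕜] S :=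
  TensorProduct.curry <|
    (TensorProduct.lift (LinearMap.mul 𝕜 S)).comp <|
      (TensorProduct.map (TensorProduct.lift (LinearMap.mul 𝕜 S))
        (TensorProduct.lift (spS A S ι))).comp
        (TensorProduct.tensorTensorTensorComm 𝕜 S L S L).toLinearMap

/-- `ω` is a representable `n`-cochain: each of the maps
`e ↦ ω k (es ++ [e]) fs` lies in the image of `φ = pairT`. -/
def IsRepr (n : ℕ) (ω : ℕ → List L → List A.leftCenter → S) : Prop :=
  ∀ (k : ℕ) (es : List L) (fs : List A.leftCenter),
    2*k + (es.length + 1) = n → fs.length = k →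
    ∃ x : S ⊗[𝕜] L, ∀ e : L, pairT A S ι x ((1 : S) ⊗ₜ[𝕜] e) = ω k (es ++ [e]) fs

/-- `ωt` is a choice of `φ`-preimages `ω̃` for the representable cochain `ω`. -/
def IsPre (n : ℕ) (ω : ℕ → List L → List A.leftCenter → S)
    (ωt : ℕ → List L → List A.leftCenter → S ⊗[𝕜] L) : Prop :=
  ∀ (k : ℕ) (es : List L) (fs : List A.leftCenter),
    2*k + (es.length + 1) = n → fs.length = k →
    ∀ e : L, pairT A S ι (ωt k es fs) ((1 : S) ⊗ₜ[𝕜] e) = ω k (es ++ [e]) fs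

/-- `ωc k es x fs` is the extension `ω̌` of `ω (k+1) es (·::fs)` from `Z` to all of
`S = S^•(Z)` in its first `Z`-slot, by the Leibniz rule. -/
structure IsExt (n : ℕ) (ω : ℕ → List L → List A.leftCenter → S)
    (ωc : ℕ → List L → S → List A.leftCenter → S) : Prop where
  on_gen : ∀ (k : ℕ) (es : List L) (fs : List A.leftCenter) (f : A.leftCenter),
    2*(k+1) + es.length = n → fs.length = k →
    ωc k es (ι f) fs = ω (k+1) es (f :: fs)
  map_add : ∀ (k : ℕ) (es : List L) (fs : List A.leftCenter) (x y : S),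
    2*(k+1) + es.length = n → fs.length = k →
    ωc k es (x + y) fs = ωc k es x fs + ωc k es y fs
  map_smul : ∀ (k : ℕ) (es : List L) (fs : List A.leftCenter) (c : 𝕜) (x : S),
    2*(k+1) + es.length = n → fs.length = k →
    ωc k es (c • x) fs = c • ωc k es x fs
  mul_rule : ∀ (k : ℕ) (es : List L) (fs : List A.leftCenter) (x y : S),
    2*(k+1) + es.length = n → fs.length = k →
    ωc k es (x * y) fs = x * ωc k es y fs + y * ωc k es x fs

/-- The operation `ω ◇ η` built from the Leibniz-rule extension `ωc` of `ω`. -/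
def cdiam (n m : ℕ) (ωc : ℕ → List L → S → List A.leftCenter → S)
    (η : ℕ → List L → List A.leftCenter → S) : ℕ → List L → List A.leftCenter → S :=
  fun k es fs => ∑ i ∈ Finset.range (k+1),
    if 2*(i+1) ≤ n ∧ 2*(k-i) ≤ m then
      shSum (n - 2*i - 2) es fun es₁ es₂ =>
        shSumU (k-i) fs fun fs₁ fs₂ => ωc i es₁ (η (k-i) es₂ fs₁) fs₂
    else 0

/-- The operation `ω • η` built from chosen `φ`-preimages `ωt`, `ηt`. -/
noncomputable def cbull (n m : ℕ)
    (ωt ηt : ℕ → List L → List A.leftCenter → S ⊗[𝕜] L) :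
    ℕ → List L → List A.leftCenter → S :=
  fun k es fs => (-1 : ℤ)^(m-1) • ∑ i ∈ Finset.range (k+1),
    if 2*i + 1 ≤ n ∧ 2*(k-i) + 1 ≤ m then
      shSum (n - 2*i - 1) es fun es₁ es₂ =>
        shSumU i fs fun fs₁ fs₂ => pairT A S ι (ωt i es₁ fs₁) (ηt (k-i) es₂ fs₂)
    else 0

/-- The bracket `{ω, η} = ω•η + ω◇η − (−1)^{nm} η◇ω` of representable cochains. -/
noncomputable def cpbr (n m : ℕ)
    (ω η : ℕ → List L → List A.leftCenter → S)
    (ωt ηt : ℕ → List L → List A.leftCenter → S ⊗[𝕜] L)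
    (ωc ηc : ℕ → List L → S → List A.leftCenter → S) :
    ℕ → List L → List A.leftCenter → S :=
  fun k es fs => cbull A S ι n m ωt ηt k es fs + cdiam A S n m ωc η k es fs
    - (-1 : ℤ)^(n*m) • cdiam A S m n ηc ω k es fs

/-- The canonical 3-cochain `Θ`. -/
def ThetaC : ℕ → List L → List A.leftCenter → S :=
  fun k es fs => match k, es, fs with
    | 0, [e₁, e₂, e₃], [] => ι (A.spZ (A.br e₁ e₂) e₃)
    | 1, [e], [f] => - ι (A.spZ e (f : L))
    | _, _, _ => 0

/-- The 2-cochain `ζ` with `ζ₀ = (·,·)` and `ζ₁(f) = −2f`. -/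
def zetaC : ℕ → List L → List A.leftCenter → S :=
  fun k es fs => match k, es, fs with
    | 0, [e₁, e₂], [] => ι (A.spZ e₁ e₂)
    | 1, [], [f] => (-2 : 𝕜) • ι f
    | _, _, _ => 0

/-- The representable 1-cochain `e^♭ = (e, ·)`. -/
def eflat (e : L) : ℕ → List L → List A.leftCenter → S :=
  fun k es fs => match k, es, fs with
    | 0, [e'], [] => ι (A.spZ e e')
    | _, _, _ => 0

end Cochains

section AuxShuffle

lemma shSplits_mem_length {α : Type*} : ∀ (l : List α), ∀ t ∈ shSplits l,
    t.2.1.length + t.2.2.length = l.length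
  | [] => by simp [shSplits]
  | a :: l => by
    intro t ht
    simp only [shSplits, List.mem_append, List.mem_map] at ht
    rcases ht with ⟨u, hu, rfl⟩ | ⟨u, hu, rfl⟩ <;>
      · have := shSplits_mem_length l u hu
        simp only [List.length_cons]
        omega

lemma shSplits_append {α : Type*} (e : α) : ∀ (l : List α),
    shSplits (l ++ [e]) = (shSplits l).flatMap fun t =>
      [((-1) ^ t.2.2.length * t.1, t.2.1 ++ [e], t.2.2), (t.1, t.2.1, t.2.2 ++ [e])]
  | [] => by simp [shSplits]
  | a :: l => by
    have IH := shSplits_append e l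
    rw [List.cons_append, shSplits, shSplits, IH, List.map_flatMap, List.map_flatMap,
      List.flatMap_append, List.flatMap_map, List.flatMap_map]
    congr 1 <;> refine List.flatMap_congr fun t ht => ?_ <;>
      simp [pow_succ, List.length_cons] <;> ring_nf

lemma sum_filter_flatMap_pair {β γ M : Type*} [AddCommMonoid M] (l : List β)
    (f g : β → γ) (q : γ → Bool) (h : γ → M) :
    (((l.flatMap fun t => [f t, g t]).filter q).map h).sum =
      ((l.filter fun t => q (f t)).map fun t => h (f t)).sum +
      ((l.filter fun t => q (g t)).map fun t => h (g t)).sum := by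
  induction l with
  | nil => simp
  | cons a l ih =>
    simp only [List.flatMap_cons, List.filter_append, List.filter_cons, List.map_append,
      List.sum_append, List.filter_nil, List.map_nil, List.sum_nil] at *
    by_cases h1 : q (f a) <;> by_cases h2 : q (g a) <;>
      simp [h1, h2, ih] <;> abel

lemma shSum_append {α M : Type*} [AddCommGroup M] (p : ℕ) (l : List α) (e : α)
    (F : List α → List α → M) :
    shSum p (l ++ [e]) F =
      (((shSplits l).filter fun t => t.2.1.length + 1 == p).map fun t =>
        ((-1 : ℤ) ^ t.2.2.length * t.1) • F (t.2.1 ++ [e]) t.2.2).sum +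
      (((shSplits l).filter fun t => t.2.1.length == p).map fun t =>
        t.1 • F t.2.1 (t.2.2 ++ [e])).sum := by
  rw [shSum, shSplits_append,
    sum_filter_flatMap_pair (shSplits l)
      (fun t => ((-1 : ℤ) ^ t.2.2.length * t.1, t.2.1 ++ [e], t.2.2))
      (fun t => (t.1, t.2.1, t.2.2 ++ [e]))
      (fun t => t.2.1.length == p) (fun t => t.1 • F t.2.1 t.2.2)]
  simp only [List.length_append, List.length_singleton]

end AuxShuffle

section AuxPair

variable {𝕜 : Type u} [Field 𝕜] {L : Type v} [AddCommGroup L] [Module 𝕜 L]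
variable (A : LeibnizAlg 𝕜 L) (S : Type w) [CommRing S] [Algebra 𝕜 S]
variable (ι : A.leftCenter →ₗ[𝕜] S)

lemma pairT_tmul (s t : S) (a b : L) :
    pairT A S ι (s ⊗ₜ[𝕜] a) (t ⊗ₜ[𝕜] b) = (s * t) * ι (A.spZ a b) := by
  simp [pairT, spS, LeibnizAlg.spL, mul_assoc]

lemma pairT_smulS (c : S) (x y : S ⊗[𝕜] L) :
    pairT A S ι (c • x) y = c * pairT A S ι x y := by
  induction x using TensorProduct.induction_on with
  | zero => simp
  | tmul s a =>
    rw [TensorProduct.smul_tmul', smul_eq_mul]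
    induction y using TensorProduct.induction_on with
    | zero => simp
    | tmul t b => rw [pairT_tmul, pairT_tmul]; ring
    | add y₁ y₂ h1 h2 => rw [map_add, map_add, h1, h2, mul_add]
  | add x₁ x₂ h1 h2 =>
    rw [smul_add, map_add, map_add, LinearMap.add_apply, LinearMap.add_apply, h1, h2, mul_add]

end AuxPair

section Theorems

variable {𝕜 : Type u} [Field 𝕜] {L : Type v} [AddCommGroup L] [Module 𝕜 L]

theorem cmul_repr (A : LeibnizAlg 𝕜 L) (S : Type w) [CommRing S] [Algebra 𝕜 S]
    (ι : A.leftCenter →ₗ[𝕜] S) (hS : IsSymAlg S ι)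
    (m l : ℕ) (η lam : ℕ → List L → List A.leftCenter → S)
    (hη : IsCochain A S m η) (hlam : IsCochain A S l lam)
    (hη' : IsRepr A S ι m η) (hlam' : IsRepr A S ι l lam) :
    IsRepr A S ι (m+l) (cmul A S m l η lam) := by
  classical
  have hηE : ∀ k' (es' : List L) (fs' : List A.leftCenter), ∃ x : S ⊗[𝕜] L,
      2*k' + (es'.length + 1) = m → fs'.length = k' →
      ∀ e : L, pairT A S ι x ((1:S) ⊗ₜ[𝕜] e) = η k' (es' ++ [e]) fs' := by
    intro k' es' fs'
    by_cases hc : 2*k' + (es'.length + 1) = m ∧ fs'.length = k'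
    · obtain ⟨x, hx⟩ := hη' k' es' fs' hc.1 hc.2
      exact ⟨x, fun _ _ => hx⟩
    · exact ⟨0, fun h1 h2 => absurd ⟨h1, h2⟩ hc⟩
  have hlE : ∀ k' (es' : List L) (fs' : List A.leftCenter), ∃ x : S ⊗[𝕜] L,
      2*k' + (es'.length + 1) = l → fs'.length = k' →
      ∀ e : L, pairT A S ι x ((1:S) ⊗ₜ[𝕜] e) = lam k' (es' ++ [e]) fs' := by
    intro k' es' fs'
    by_cases hc : 2*k' + (es'.length + 1) = l ∧ fs'.length = k'
    · obtain ⟨x, hx⟩ := hlam' k' es' fs' hc.1 hc.2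
      exact ⟨x, fun _ _ => hx⟩
    · exact ⟨0, fun h1 h2 => absurd ⟨h1, h2⟩ hc⟩
  choose ηt hηt using hηE
  choose lt hlt using hlE
  intro k es fs hlen hfs
  refine ⟨∑ i ∈ Finset.range (k+1), if 2*i ≤ m ∧ 2*(k-i) ≤ l then
      (((shSplits es).filter fun t => t.2.1.length + 1 == m - 2*i).map fun t =>
        ((-1:ℤ)^t.2.2.length * t.1) •
          (((shSplits fs).filter fun u => u.2.1.length == i).map fun u =>
            lam (k-i) t.2.2 u.2.2 • ηt i t.2.1 u.2.1).sum).sum +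
      (((shSplits es).filter fun t => t.2.1.length == m - 2*i).map fun t =>
        t.1 •
          (((shSplits fs).filter fun u => u.2.1.length == i).map fun u =>
            η i t.2.1 u.2.1 • lt (k-i) t.2.2 u.2.2).sum).sum
    else 0, ?_⟩
  intro e
  set P : S ⊗[𝕜] L →ₗ[𝕜] S := (pairT A S ι).flip ((1:S) ⊗ₜ[𝕜] e) with hP
  have hPdef : ∀ x : S ⊗[𝕜] L, P x = pairT A S ι x ((1:S) ⊗ₜ[𝕜] e) := fun _ => rfl
  show P _ = _
  rw [map_sum, cmul]
  refine Finset.sum_congr rfl fun i hi => ?_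
  simp only [Finset.mem_range] at hi
  by_cases hc : 2*i ≤ m ∧ 2*(k-i) ≤ l
  · rw [if_pos hc, if_pos hc, map_add, map_list_sum, map_list_sum, List.map_map, List.map_map,
      shSum_append]
    congr 1
    · refine congrArg List.sum (List.map_congr_left fun t ht => ?_)
      have htm := List.mem_filter.mp ht
      have htl := shSplits_mem_length es t htm.1
      have htp : t.2.1.length + 1 = m - 2*i := by
        have := htm.2; simpa using this
      simp only [Function.comp_apply, map_zsmul, map_list_sum, List.map_map]
      congr 1
      rw [shSumU]
      refine congrArg List.sum (List.map_congr_left fun u hu => ?_)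
      have hum := List.mem_filter.mp hu
      have hul := shSplits_mem_length fs u hum.1
      have hup : u.2.1.length = i := by have := hum.2; simpa using this
      simp only [Function.comp_apply]
      rw [hPdef, pairT_smulS, hηt i t.2.1 u.2.1 (by omega) hup e, mul_comm]
    · refine congrArg List.sum (List.map_congr_left fun t ht => ?_)
      have htm := List.mem_filter.mp ht
      have htl := shSplits_mem_length es t htm.1
      have htp : t.2.1.length = m - 2*i := by
        have := htm.2; simpa using this
      simp only [Function.comp_apply, map_zsmul, map_list_sum, List.map_map]
      congr 1
      rw [shSumU]
      refine congrArg List.sum (List.map_congr_left fun u hu => ?_)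
      have hum := List.mem_filter.mp hu
      have hul := shSplits_mem_length fs u hum.1
      have hup : u.2.1.length = i := by have := hum.2; simpa using this
      simp only [Function.comp_apply]
      rw [hPdef, pairT_smulS, hlt (k-i) t.2.2 u.2.2 (by omega) (by omega) e]
  · rw [if_neg hc, if_neg hc, map_zero]


end Theorems
end

section
/- Let L be a Leibniz algebra over a field 𝕜 with left center Z, and let ω ∈ C̃^n(L), η ∈ C̃^m(L) be representable cochains. Then ω•η is a cochain in C^{n+m−2}(L); that is, it satisfies the weak skew-symmetry condition (ω•η)_k(…,e_a,e_{a+1},…; f₁,…,f_k) + (ω•η)_k(…,e_{a+1},e_a,…; f₁,…,f_k) = −(ω•η)_{k+1}(…,ê_a,ê_{a+1},…; (e_a,e_{a+1}), f₁,…,f_k). -/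
open scoped TensorProduct

universe u v w

/-!
Write `ω • η` as a signed sum over all shuffles `(a, b)` of the `L`-arguments and all unsigned
splittings `(c, d)` of the `Z`-arguments of `⟨ω̃(a; c), η̃(b; d)⟩`. When two adjacent arguments
`x, y` are swapped, the shuffles separating them cancel in pairs. On the shuffles sending both to
`ω̃`, weak skew-symmetry of `ω` passes to `ω̃` (an element of `S^•(Z) ⊗ L` is determined by its
pairings with the `1 ⊗ e`) and replaces `x, y` by the new `Z`-argument `(x, y)` of `ω̃`; likewise
for `η̃`. These are exactly the two places `(x, y)` can go in `(ω • η)_{k+1}`.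
-/

section SplitSums

variable {α M : Type*} [AddCommGroup M]

lemma length_add_length_of_mem_shSplits {l : List α} {t : ℤ × List α × List α}
    (ht : t ∈ shSplits l) : t.2.1.length + t.2.2.length = l.length := by
  induction l generalizing t with
  | nil => simp_all [shSplits]
  | cons a l ih =>
    simp only [shSplits, List.mem_append, List.mem_map] at ht
    rcases ht with ⟨u, hu, rfl⟩ | ⟨u, hu, rfl⟩ <;> simp [← ih hu] <;> omega

def splitSum (l : List α) : (List α → List α → M) →+ M where
  toFun F := ((shSplits l).map fun t => t.1 • F t.2.1 t.2.2).sum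
  map_zero' := by simp
  map_add' F G := by simp [List.sum_map_add]

def splitSumU (l : List α) : (List α → List α → M) →+ M where
  toFun F := ((shSplits l).map fun t => F t.2.1 t.2.2).sum
  map_zero' := by simp
  map_add' F G := by simp [List.sum_map_add]

lemma splitSum_congr {l : List α} {F G : List α → List α → M}
    (h : ∀ a b, a.length + b.length = l.length → F a b = G a b) :
    splitSum l F = splitSum l G := by
  simp only [splitSum, AddMonoidHom.coe_mk, ZeroHom.coe_mk]
  exact congrArg List.sum <| List.map_congr_left fun t ht ↦ by
    rw [h _ _ (length_add_length_of_mem_shSplits ht)]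

lemma splitSumU_congr {l : List α} {F G : List α → List α → M}
    (h : ∀ a b, a.length + b.length = l.length → F a b = G a b) :
    splitSumU l F = splitSumU l G := by
  simp only [splitSumU, AddMonoidHom.coe_mk, ZeroHom.coe_mk]
  exact congrArg List.sum <| List.map_congr_left fun t ht ↦
    h _ _ (length_add_length_of_mem_shSplits ht)

lemma shSum_eq_splitSum (r : ℕ) (l : List α) (F : List α → List α → M) :
    shSum r l F = splitSum l fun a b ↦ if a.length = r then F a b else 0 := by
  simp only [shSum, splitSum, AddMonoidHom.coe_mk, ZeroHom.coe_mk]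
  induction shSplits l with
  | nil => rfl
  | cons t ts ih => by_cases h : t.2.1.length = r <;> simp [h, ih]

lemma shSumU_eq_splitSumU (r : ℕ) (l : List α) (F : List α → List α → M) :
    shSumU r l F = splitSumU l fun a b ↦ if a.length = r then F a b else 0 := by
  simp only [shSumU, splitSumU, AddMonoidHom.coe_mk, ZeroHom.coe_mk]
  induction shSplits l with
  | nil => rfl
  | cons t ts ih => by_cases h : t.2.1.length = r <;> simp [h, ih]

lemma splitSum_cons (a : α) (l : List α) (F : List α → List α → M) :
    splitSum (a :: l) F = splitSum l (fun u v ↦ F (a :: u) v)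
      + splitSum l (fun u v ↦ (-1 : ℤ) ^ u.length • F u (a :: v)) := by
  simp [splitSum, shSplits, Function.comp_def, mul_smul, smul_comm (_ : ℤ) ((-1 : ℤ) ^ _)]

lemma splitSumU_cons (a : α) (l : List α) (F : List α → List α → M) :
    splitSumU (a :: l) F = splitSumU l (fun u v ↦ F (a :: u) v)
      + splitSumU l (fun u v ↦ F u (a :: v)) := by
  simp [splitSumU, shSplits, Function.comp_def]

lemma splitSum_cons_cons_add_swap (x y : α) (l : List α) (F : List α → List α → M) :
    splitSum (x :: y :: l) F + splitSum (y :: x :: l) F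
      = splitSum l (fun u v ↦ F (x :: y :: u) v + F (y :: x :: u) v)
        + splitSum l (fun u v ↦ F u (x :: y :: v) + F u (y :: x :: v)) := by
  rw [← sub_eq_zero]
  simp only [splitSum_cons, List.length_cons, ← map_add, ← map_sub]
  refine (congrArg (splitSum l) ?_).trans (map_zero _)
  -- the terms sending `x` and `y` to different sides occur once with each sign
  funext u v
  simp only [Pi.add_apply, Pi.sub_apply, Pi.zero_apply, pow_succ, smul_smul]
  simp only [mul_neg, mul_one, neg_smul, ← pow_add, ← two_mul, pow_mul, neg_one_sq, one_pow,
    one_smul]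
  abel

lemma length_swap_neg_one_pow (x y : α) (p q : List α) :
    (-1 : ℤ) ^ (p ++ x :: y :: q).length = (-1) ^ (p ++ q).length := by
  simp [pow_add, pow_succ]

lemma splitSum_swap_add (x y : α) (P Q : List α) {F G₁ G₂ : List α → List α → M}
    (h₁ : ∀ p q b, F (p ++ x :: y :: q) b + F (p ++ y :: x :: q) b = G₁ (p ++ q) b)
    (h₂ : ∀ a p q, F a (p ++ x :: y :: q) + F a (p ++ y :: x :: q) = G₂ a (p ++ q)) :
    splitSum (P ++ x :: y :: Q) F + splitSum (P ++ y :: x :: Q) F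
      = splitSum (P ++ Q) G₁ + splitSum (P ++ Q) G₂ := by
  induction P generalizing F G₁ G₂ with
  | nil =>
    rw [List.nil_append, List.nil_append, List.nil_append, splitSum_cons_cons_add_swap]
    congr 2 <;> funext u v
    exacts [h₁ [] u v, h₂ u [] v]
  | cons c P ih =>
    simp only [List.cons_append, splitSum_cons]
    have hc := ih (F := fun u v ↦ F (c :: u) v) (G₁ := fun u v ↦ G₁ (c :: u) v)
      (fun p q b ↦ h₁ (c :: p) q b)
      (fun a p q ↦ h₂ (c :: a) p q)
    have hc' := ih (F := fun u v ↦ (-1 : ℤ) ^ u.length • F u (c :: v))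
      (G₁ := fun u v ↦ (-1 : ℤ) ^ u.length • G₁ u (c :: v))
      (G₂ := fun u v ↦ (-1 : ℤ) ^ u.length • G₂ u (c :: v))
      (fun p q b ↦ by
        rw [length_swap_neg_one_pow, length_swap_neg_one_pow y x, ← smul_add, h₁])
      (fun a p q ↦ by rw [← smul_add]; exact congrArg _ (h₂ a (c :: p) q))
    rw [add_add_add_comm, hc, hc']
    abel

end SplitSums

section Pairing

variable {𝕜 : Type u} [Field 𝕜] {L : Type v} [AddCommGroup L] [Module 𝕜 L]
variable (A : LeibnizAlg 𝕜 L) (S : Type w) [CommRing S] [Algebra 𝕜 S]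
variable (ι : A.leftCenter →ₗ[𝕜] S)

lemma pairT_tmul_tmul (s₁ s₂ : S) (e₁ e₂ : L) :
    pairT A S ι (s₁ ⊗ₜ e₁) (s₂ ⊗ₜ e₂) = s₁ * s₂ * ι (A.spZ e₁ e₂) := by
  simp [pairT, spS, LeibnizAlg.spL, TensorProduct.tensorTensorTensorComm_tmul]

lemma pairT_tmul_right (X : S ⊗[𝕜] L) (s : S) (e : L) :
    pairT A S ι X (s ⊗ₜ e) = s * pairT A S ι X (1 ⊗ₜ e) := by
  induction X using TensorProduct.induction_on with
  | zero => simp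
  | tmul s₁ e₁ => rw [pairT_tmul_tmul, pairT_tmul_tmul]; ring
  | add X X' hX hX' => simp only [map_add, LinearMap.add_apply, hX, hX', mul_add]

lemma pairT_eq_zero_of_forall_one_tmul {X : S ⊗[𝕜] L}
    (hX : ∀ e : L, pairT A S ι X (1 ⊗ₜ e) = 0) (Y : S ⊗[𝕜] L) : pairT A S ι X Y = 0 := by
  induction Y using TensorProduct.induction_on with
  | zero => simp
  | tmul s e => rw [pairT_tmul_right, hX, mul_zero]
  | add Y Y' hY hY' => rw [map_add, hY, hY', add_zero]

lemma pairT_comm (X Y : S ⊗[𝕜] L) : pairT A S ι X Y = pairT A S ι Y X := by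
  induction X using TensorProduct.induction_on with
  | zero => simp
  | add X X' hX hX' => simp only [map_add, LinearMap.add_apply, hX, hX']
  | tmul s₁ e₁ =>
    induction Y using TensorProduct.induction_on with
    | zero => simp
    | add Y Y' hY hY' => simp only [map_add, LinearMap.add_apply, hY, hY']
    | tmul s₂ e₂ =>
      rw [pairT_tmul_tmul, pairT_tmul_tmul, mul_comm s₁,
        show A.spZ e₁ e₂ = A.spZ e₂ e₁ from Subtype.ext (add_comm _ _)]

def gradedPre (n : ℕ) (ωt : ℕ → List L → List A.leftCenter → S ⊗[𝕜] L) (es : List L)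
    (fs : List A.leftCenter) : S ⊗[𝕜] L :=
  if 2 * fs.length + es.length + 1 = n then ωt fs.length es fs else 0

variable {A S ι} {n : ℕ} {ω : ℕ → List L → List A.leftCenter → S}
  {ωt : ℕ → List L → List A.leftCenter → S ⊗[𝕜] L}

lemma pairT_gradedPre_skew_left (hω : IsCochain A S n ω) (hωt : IsPre A S ι n ω ωt)
    (p q : List L) (x y : L) (c : List A.leftCenter) (Y : S ⊗[𝕜] L) :
    pairT A S ι (gradedPre A S n ωt (p ++ x :: y :: q) c) Y
      + pairT A S ι (gradedPre A S n ωt (p ++ y :: x :: q) c) Y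
      = - pairT A S ι (gradedPre A S n ωt (p ++ q) (A.spZ x y :: c)) Y := by
  have hsum : ∀ e : L, pairT A S ι (gradedPre A S n ωt (p ++ x :: y :: q) c
      + gradedPre A S n ωt (p ++ y :: x :: q) c
      + gradedPre A S n ωt (p ++ q) (A.spZ x y :: c)) (1 ⊗ₜ e) = 0 := fun e ↦ by
    simp only [gradedPre, List.length_append, List.length_cons]
    by_cases hn : 2 * c.length + (p.length + q.length) + 3 = n
    · rw [if_pos (by omega), if_pos (by omega), if_pos (by omega)]
      simp only [map_add, LinearMap.add_apply]
      rw [hωt _ _ _ (by simp; omega) rfl, hωt _ _ _ (by simp; omega) rfl,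
        hωt (c.length + 1) _ (A.spZ x y :: c) (by simp; omega) rfl]
      have hskew := hω.skew c.length p (q ++ [e]) x y c (by simp; omega) rfl
      simp only [List.append_assoc, List.cons_append] at hskew ⊢
      rw [hskew, neg_add_cancel]
    · rw [if_neg (by omega), if_neg (by omega), if_neg (by omega)]
      simp
  have h := pairT_eq_zero_of_forall_one_tmul A S ι hsum Y
  simp only [map_add, LinearMap.add_apply] at h
  exact eq_neg_of_add_eq_zero_left h

lemma pairT_gradedPre_skew_right (hω : IsCochain A S n ω) (hωt : IsPre A S ι n ω ωt)
    (p q : List L) (x y : L) (d : List A.leftCenter) (X : S ⊗[𝕜] L) :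
    pairT A S ι X (gradedPre A S n ωt (p ++ x :: y :: q) d)
      + pairT A S ι X (gradedPre A S n ωt (p ++ y :: x :: q) d)
      = - pairT A S ι X (gradedPre A S n ωt (p ++ q) (A.spZ x y :: d)) := by
  simp only [pairT_comm A S ι X]
  exact pairT_gradedPre_skew_left hω hωt p q x y d X

end Pairing

section Bullet

variable {𝕜 : Type u} [Field 𝕜] {L : Type v} [AddCommGroup L] [Module 𝕜 L]
variable {A : LeibnizAlg 𝕜 L} {S : Type w} [CommRing S] [Algebra 𝕜 S]
variable {ι : A.leftCenter →ₗ[𝕜] S}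

/-- Once `es` and `fs` have total degree `n + m - 2`, the length of the `Z`-part `c` sent to `ω`
fixes every other length, so the sum over `i` in `cbull` becomes a plain sum over all shuffles. -/
lemma cbull_eq_splitSum (n m : ℕ) (ωt ηt : ℕ → List L → List A.leftCenter → S ⊗[𝕜] L)
    (k : ℕ) (es : List L) (fs : List A.leftCenter) (hfs : fs.length = k)
    (hlen : es.length + 2 * k + 2 = n + m) :
    cbull A S ι n m ωt ηt k es fs = (-1 : ℤ) ^ (m - 1) • splitSum es fun a b ↦
      splitSumU fs fun c d ↦ pairT A S ι (gradedPre A S n ωt a c) (gradedPre A S m ηt b d) := by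
  set Φ : ℕ → List L → List L → List A.leftCenter → List A.leftCenter → S := fun i a b c d ↦
    if 2 * i + 1 ≤ n ∧ 2 * (k - i) + 1 ≤ m ∧ a.length = n - 2 * i - 1 ∧ c.length = i then
      pairT A S ι (ωt i a c) (ηt (k - i) b d)
    else 0
  have hterm : ∀ i, (if 2 * i + 1 ≤ n ∧ 2 * (k - i) + 1 ≤ m then
      shSum (n - 2 * i - 1) es fun a b ↦
        shSumU i fs fun c d ↦ pairT A S ι (ωt i a c) (ηt (k - i) b d)
      else 0) = splitSum es fun a b ↦ splitSumU fs fun c d ↦ Φ i a b c d := fun i ↦ by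
    by_cases hg : 2 * i + 1 ≤ n ∧ 2 * (k - i) + 1 ≤ m
    · simp only [if_pos hg, shSum_eq_splitSum, shSumU_eq_splitSumU, Φ]
      congr 1; funext a b
      by_cases ha : a.length = n - 2 * i - 1
      · simp [hg, ha]
      · simp only [ha, hg, if_false, false_and, and_false]
        exact (map_zero _).symm
    · rw [if_neg hg]
      refine ((congrArg _ (funext₂ fun a b ↦ ?_)).trans (map_zero _)).symm
      exact (congrArg _ (funext₂ fun c d ↦ if_neg fun h ↦ hg ⟨h.1, h.2.1⟩)).trans (map_zero _)
  simp only [cbull, hterm]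
  congr 1
  rw [← map_sum]
  refine splitSum_congr fun a b hab ↦ ?_
  rw [Finset.sum_apply, Finset.sum_apply, ← map_sum]
  refine splitSumU_congr fun c d hcd ↦ ?_
  rw [Finset.sum_apply, Finset.sum_apply,
    Finset.sum_eq_single_of_mem c.length (by simp; omega) fun i _ hi ↦ if_neg (by omega)]
  simp only [gradedPre, show d.length = k - c.length by omega, and_true]
  by_cases hn : 2 * c.length + a.length + 1 = n
  · rw [if_pos (by omega), if_pos hn, if_pos (by omega)]
  · rw [if_neg (by omega), if_neg hn, map_zero, LinearMap.zero_apply]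

end Bullet

section Theorems

variable {𝕜 : Type u} [Field 𝕜] {L : Type v} [AddCommGroup L] [Module 𝕜 L]

theorem cbull_isCochain_general (A : LeibnizAlg 𝕜 L) (S : Type w) [CommRing S] [Algebra 𝕜 S]
    (ι : A.leftCenter →ₗ[𝕜] S)
    (n m : ℕ) (ω η : ℕ → List L → List A.leftCenter → S)
    (hω : IsCochain A S n ω) (hη : IsCochain A S m η)
    (ωt ηt : ℕ → List L → List A.leftCenter → S ⊗[𝕜] L)
    (hωt : IsPre A S ι n ω ωt) (hηt : IsPre A S ι m η ηt) :
    ∀ (k : ℕ) (p q : List L) (x y : L) (fs : List A.leftCenter),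
      2*k + (p.length + 2 + q.length) + 2 = n + m → fs.length = k →
      cbull A S ι n m ωt ηt k (p ++ x :: y :: q) fs
        + cbull A S ι n m ωt ηt k (p ++ y :: x :: q) fs
        = - cbull A S ι n m ωt ηt (k+1) (p ++ q) (A.spZ x y :: fs) := by
  intro k p q x y fs hlen hfs
  rw [cbull_eq_splitSum n m ωt ηt k _ fs hfs (by simp; omega),
    cbull_eq_splitSum n m ωt ηt k _ fs hfs (by simp; omega),
    cbull_eq_splitSum n m ωt ηt (k + 1) _ _ (by simp [hfs]) (by simp; omega),
    ← smul_add, ← smul_neg]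
  congr 1
  rw [splitSum_swap_add x y p q (G₁ := fun a b ↦ -splitSumU fs fun c d ↦
        pairT A S ι (gradedPre A S n ωt a (A.spZ x y :: c)) (gradedPre A S m ηt b d))
      (G₂ := fun a b ↦ -splitSumU fs fun c d ↦
        pairT A S ι (gradedPre A S n ωt a c) (gradedPre A S m ηt b (A.spZ x y :: d)))
      (fun p q b ↦ by
        rw [← map_add, ← map_neg]
        exact congrArg _ (funext₂ fun c d ↦ pairT_gradedPre_skew_left hω hωt p q x y c _))
      (fun a p q ↦ by
        rw [← map_add, ← map_neg]
        exact congrArg _ (funext₂ fun c d ↦ pairT_gradedPre_skew_right hη hηt p q x y d _))]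
  rw [← map_add, ← map_neg]
  congr 1
  funext a b
  rw [Pi.add_apply, Pi.add_apply, Pi.neg_apply, Pi.neg_apply, splitSumU_cons, neg_add]

theorem cbull_isCochain (A : LeibnizAlg 𝕜 L) (S : Type w) [CommRing S] [Algebra 𝕜 S]
    (ι : A.leftCenter →ₗ[𝕜] S) (hS : IsSymAlg S ι)
    (n m : ℕ) (ω η : ℕ → List L → List A.leftCenter → S)
    (hω : IsCochain A S n ω) (hη : IsCochain A S m η)
    (ωt ηt : ℕ → List L → List A.leftCenter → S ⊗[𝕜] L)
    (hωt : IsPre A S ι n ω ωt) (hηt : IsPre A S ι m η ηt) :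
    ∀ (k : ℕ) (p q : List L) (x y : L) (fs : List A.leftCenter),
      2*k + (p.length + 2 + q.length) + 2 = n + m → fs.length = k →
      cbull A S ι n m ωt ηt k (p ++ x :: y :: q) fs
        + cbull A S ι n m ωt ηt k (p ++ y :: x :: q) fs
        = - cbull A S ι n m ωt ηt (k+1) (p ++ q) (A.spZ x y :: fs) :=
  cbull_isCochain_general A S ι n m ω η hω hη ωt ηt hωt hηt
end Theorems
end

section
/- Let L be a Leibniz algebra over a field 𝕜 with left center Z, and let ω ∈ C^n(L), η ∈ C^m(L). Then ω◇η is a cochain in C^{n+m−2}(L); that is, it satisfies the weak skew-symmetry condition (ω◇η)_k(…,e_a,e_{a+1},…; f₁,…,f_k) + (ω◇η)_k(…,e_{a+1},e_a,…; f₁,…,f_k) = −(ω◇η)_{k+1}(…,ê_a,ê_{a+1},…; (e_a,e_{a+1}), f₁,…,f_k). -/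
open scoped TensorProduct

universe u v w

section Aux

variable {α : Type*} {M : Type*} [AddCommGroup M]

lemma map_sum_congr {β : Type*} {N : Type*} [AddCommMonoid N] (l : List β) (f g : β → N)
    (h : ∀ b ∈ l, f b = g b) : (l.map f).sum = (l.map g).sum := by
  rw [List.map_congr_left h]

lemma list_sum_map_add {β : Type*} {N₀ : Type*} [AddCommMonoid N₀] (l : List β) (f g : β → N₀) :
    (l.map fun t => f t + g t).sum = (l.map f).sum + (l.map g).sum := by
  induction l with
  | nil => simp
  | cons a l ih =>
    simp only [List.map_cons, List.sum_cons, ih]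
    rw [add_add_add_comm]

lemma list_sum_map_zero {β : Type*} {N : Type*} [AddCommMonoid N] (l : List β) :
    (l.map fun _ => (0 : N)).sum = 0 := by
  induction l with
  | nil => simp
  | cons a l ih => simp [ih]

lemma shSplits_length (l : List α) :
    ∀ t ∈ shSplits l, t.2.1.length + t.2.2.length = l.length := by
  induction l with
  | nil => intro t ht; simp [shSplits] at ht; simp [ht]
  | cons a l ih =>
    intro t ht
    simp only [shSplits, List.mem_append, List.mem_map] at ht
    rcases ht with ⟨s, hs, rfl⟩ | ⟨s, hs, rfl⟩ <;>
      · have := ih s hs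
        simp only [List.length_cons]
        omega

def shT (l : List α) (F : List α → List α → M) : M :=
  ((shSplits l).map fun t => t.1 • F t.2.1 t.2.2).sum

lemma shT_nil (F : List α → List α → M) : shT [] F = F [] [] := by
  simp [shT, shSplits]

lemma shT_cons (a : α) (l : List α) (F : List α → List α → M) :
    shT (a :: l) F = shT l (fun l1 l2 => F (a :: l1) l2)
      + shT l (fun l1 l2 => ((-1 : ℤ) ^ l1.length) • F l1 (a :: l2)) := by
  simp only [shT, shSplits, List.map_append, List.sum_append, List.map_map]
  exact congrArg₂ (· + ·) (map_sum_congr _ _ _ fun t _ => rfl)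
    (map_sum_congr _ _ _ fun t _ => by
      simp only [Function.comp_apply]; rw [mul_comm, mul_smul])

lemma shT_congr (l : List α) (F G : List α → List α → M)
    (h : ∀ l1 l2, l1.length + l2.length = l.length → F l1 l2 = G l1 l2) :
    shT l F = shT l G :=
  map_sum_congr _ _ _ (fun t ht => by rw [h _ _ (shSplits_length l t ht)])

lemma shT_add (l : List α) (F G : List α → List α → M) :
    shT l (fun l1 l2 => F l1 l2 + G l1 l2) = shT l F + shT l G := by
  unfold shT
  rw [← list_sum_map_add]
  exact map_sum_congr _ _ _ (fun t _ => by simp [smul_add])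

lemma shT_zero (l : List α) : shT l (fun _ _ => (0 : M)) = 0 := by
  unfold shT
  rw [← list_sum_map_zero (shSplits l)]
  exact map_sum_congr _ _ _ (fun t _ => by simp)

lemma shT_neg (l : List α) (F : List α → List α → M) :
    shT l (fun l1 l2 => - F l1 l2) = - shT l F := by
  have h := shT_add l F (fun l1 l2 => - F l1 l2)
  rw [eq_neg_iff_add_eq_zero, add_comm, ← h]
  rw [← shT_zero l]
  exact shT_congr _ _ _ (fun l1 l2 _ => by simp)

lemma shSum_eq_shT (r : ℕ) (l : List α) (F : List α → List α → M) :
    shSum r l F = shT l (fun l1 l2 => if l1.length = r then F l1 l2 else 0) := by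
  unfold shSum shT
  induction shSplits l with
  | nil => simp
  | cons t ts ih =>
    by_cases h : t.2.1.length = r
    · simp [List.filter_cons, h, ih]
    · simp [List.filter_cons, h, ih]

lemma shSum_congr (r : ℕ) (l : List α) (F G : List α → List α → M)
    (h : ∀ l1 l2, l1.length = r → l1.length + l2.length = l.length → F l1 l2 = G l1 l2) :
    shSum r l F = shSum r l G := by
  rw [shSum_eq_shT, shSum_eq_shT]
  apply shT_congr
  intro l1 l2 hl
  by_cases h1 : l1.length = r
  · simp only [h1, if_true]; exact h _ _ h1 hl
  · simp [h1]

lemma shSum_add (r : ℕ) (l : List α) (F G : List α → List α → M) :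
    shSum r l (fun l1 l2 => F l1 l2 + G l1 l2) = shSum r l F + shSum r l G := by
  unfold shSum
  exact (map_sum_congr ((shSplits l).filter fun t => t.2.1.length == r) _
    (fun t => t.1 • F t.2.1 t.2.2 + t.1 • G t.2.1 t.2.2)
    (fun t _ => by simp [smul_add])).trans (list_sum_map_add _ _ _)

lemma shSum_neg (r : ℕ) (l : List α) (F : List α → List α → M) :
    shSum r l (fun l1 l2 => - F l1 l2) = - shSum r l F := by
  have h := shSum_add r l F (fun l1 l2 => - F l1 l2)
  rw [eq_neg_iff_add_eq_zero, add_comm, ← h]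
  unfold shSum
  rw [← list_sum_map_zero ((shSplits l).filter fun t => t.2.1.length == r)]
  exact map_sum_congr _ _ _ (fun t _ => by simp)

lemma shSum_zero_of_gt (r : ℕ) (l : List α) (F : List α → List α → M)
    (h : l.length < r) : shSum r l F = 0 := by
  rw [shSum_eq_shT]
  rw [shT_congr l _ (fun _ _ => (0 : M)) (fun l1 l2 hl => by
    have : l1.length ≠ r := by omega
    simp [this])]
  exact shT_zero l

variable {N : Type*} [AddCommMonoid N]

lemma shSumU_congr (r : ℕ) (l : List α) (F G : List α → List α → N)
    (h : ∀ l1 l2, l1.length = r → l1.length + l2.length = l.length → F l1 l2 = G l1 l2) :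
    shSumU r l F = shSumU r l G := by
  unfold shSumU
  apply map_sum_congr
  intro t ht
  rw [List.mem_filter] at ht
  exact h _ _ (by simpa using ht.2) (shSplits_length l t ht.1)

lemma shSumU_add (r : ℕ) (l : List α) (F G : List α → List α → N) :
    shSumU r l (fun l1 l2 => F l1 l2 + G l1 l2) = shSumU r l F + shSumU r l G := by
  unfold shSumU
  exact (map_sum_congr ((shSplits l).filter fun t => t.2.1.length == r) _
    (fun t => F t.2.1 t.2.2 + G t.2.1 t.2.2)
    (fun t _ => rfl)).trans (list_sum_map_add _ _ _)

lemma shSumU_neg (r : ℕ) (l : List α) (F : List α → List α → M) :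
    shSumU r l (fun l1 l2 => - F l1 l2) = - shSumU r l F := by
  unfold shSumU
  induction ((shSplits l).filter fun t => t.2.1.length == r) with
  | nil => simp
  | cons t ts ih => simp only [List.map_cons, List.sum_cons, ih]; abel

lemma shSumU_zero_of_gt (r : ℕ) (l : List α) (F : List α → List α → N)
    (h : l.length < r) : shSumU r l F = 0 := by
  unfold shSumU
  have he : (shSplits l).filter (fun t => t.2.1.length == r) = [] := by
    rw [List.filter_eq_nil_iff]
    intro t ht
    have := shSplits_length l t ht
    simp only [beq_iff_eq]
    omega
  simp [he]

lemma shSumU_cons_zero (a : α) (l : List α) (F : List α → List α → N) :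
    shSumU 0 (a :: l) F = shSumU 0 l (fun l1 l2 => F l1 (a :: l2)) := by
  unfold shSumU
  simp only [shSplits, List.filter_append, List.filter_map, List.map_append, List.sum_append,
    List.map_map]
  have h1 : (shSplits l).filter
      ((fun t => t.2.1.length == 0) ∘ fun t => ((t.1, a :: t.2.1, t.2.2) : ℤ × List α × List α))
      = [] := by
    rw [List.filter_eq_nil_iff]; intro t ht; simp [Function.comp]
  rw [h1]
  simp only [List.map_nil, List.sum_nil, zero_add]
  rw [List.filter_congr (q := fun t => t.2.1.length == 0) (fun t _ => by simp [Function.comp])]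
  exact map_sum_congr _ _ _ (fun t _ => rfl)

lemma shSumU_cons_succ (r : ℕ) (a : α) (l : List α) (F : List α → List α → N) :
    shSumU (r+1) (a :: l) F = shSumU r l (fun l1 l2 => F (a :: l1) l2)
      + shSumU (r+1) l (fun l1 l2 => F l1 (a :: l2)) := by
  unfold shSumU
  simp only [shSplits, List.filter_append, List.filter_map, List.map_append, List.sum_append,
    List.map_map]
  refine congrArg₂ (· + ·) ?_ ?_
  · rw [List.filter_congr (q := fun t => t.2.1.length == r) (fun t _ => by simp [Function.comp])]
    exact map_sum_congr _ _ _ (fun t _ => rfl)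
  · rw [List.filter_congr (q := fun t => t.2.1.length == r+1) (fun t _ => by simp [Function.comp])]
    exact map_sum_congr _ _ _ (fun t _ => rfl)

end Aux

section Swap

variable {α : Type*} {M : Type*} [AddCommGroup M]

lemma shT_swap (x y : α) :
    ∀ (p q : List α) (F F₁ F₂ : List α → List α → M),
    (∀ p' q' l2, p'.length + q'.length + l2.length = p.length + q.length →
      F (p' ++ x :: y :: q') l2 + F (p' ++ y :: x :: q') l2 = F₁ (p' ++ q') l2) →
    (∀ l1 p' q', l1.length + p'.length + q'.length = p.length + q.length →
      F l1 (p' ++ x :: y :: q') + F l1 (p' ++ y :: x :: q') = F₂ l1 (p' ++ q')) →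
    shT (p ++ x :: y :: q) F + shT (p ++ y :: x :: q) F
      = shT (p ++ q) F₁ + shT (p ++ q) F₂ := by
  intro p
  induction p with
  | nil =>
    intro q F F₁ F₂ h1 h2
    simp only [List.nil_append]
    simp only [shT_cons, List.length_cons]
    rw [← shT_add, ← shT_add, ← shT_add, ← shT_add, ← shT_add, ← shT_add, ← shT_add, ← shT_add]
    apply shT_congr
    intro l1 l2 hlen
    have e1 := h1 [] l1 l2 (by simpa using hlen)
    have e2 := h2 l1 [] l2 (by simpa using hlen)
    simp only [List.nil_append] at e1 e2
    rw [← e1, ← e2]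
    have c1 : ∀ v : M, (-1 : ℤ) ^ (l1.length + 1) • v = -((-1 : ℤ) ^ l1.length • v) := by
      intro v
      rw [pow_succ, mul_smul]
      simp
    have c2 : ∀ v : M, (-1 : ℤ) ^ l1.length • (-1 : ℤ) ^ l1.length • v = v := by
      intro v
      rw [smul_smul, ← pow_add, ← two_mul, pow_mul]
      norm_num
    rw [c1, c1, c2, c2]
    abel
  | cons a p ih =>
    intro q F F₁ F₂ h1 h2
    simp only [List.cons_append]
    rw [shT_cons, shT_cons, shT_cons a (p ++ q) F₁, shT_cons a (p ++ q) F₂]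
    rw [add_add_add_comm]
    rw [ih q (fun l1 l2 => F (a :: l1) l2)
      (fun l1 l2 => F₁ (a :: l1) l2) (fun l1 l2 => F₂ (a :: l1) l2)
      (fun p' q' l2 hl => h1 (a :: p') q' l2 (by simp at hl ⊢; omega))
      (fun l1 p' q' hl => h2 (a :: l1) p' q' (by simp at hl ⊢; omega))]
    rw [ih q (fun l1 l2 => ((-1 : ℤ) ^ l1.length) • F l1 (a :: l2))
      (fun l1 l2 => ((-1 : ℤ) ^ l1.length) • F₁ l1 (a :: l2))
      (fun l1 l2 => ((-1 : ℤ) ^ l1.length) • F₂ l1 (a :: l2))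
      (fun p' q' l2 hl => by
        have e : (p' ++ y :: x :: q').length = (p' ++ x :: y :: q').length := by simp
        rw [e, ← smul_add, h1 p' q' (a :: l2) (by simp at hl ⊢; omega)]
        have e2 : (p' ++ x :: y :: q').length = (p' ++ q').length + 2 := by simp; omega
        rw [e2, pow_add]
        norm_num)
      (fun l1 p' q' hl => by
        rw [← smul_add]
        exact congrArg (fun v => ((-1 : ℤ) ^ l1.length) • v)
          (h2 l1 (a :: p') q' (by simp at hl ⊢; omega)))]
    abel

end Swap

section SymAux

variable {𝕜 : Type u} [Field 𝕜] {Z : Type v} [AddCommGroup Z] [Module 𝕜 Z]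
variable {S : Type w} [CommRing S] [Algebra 𝕜 S]

/-- down algebra hom for ULift -/
def uliftDownAlg (R A : Type*) [CommSemiring R] [Semiring A] [Algebra R A] :
    ULift A →ₐ[R] A :=
  { (ULift.ringEquiv : ULift A ≃+* A).toRingHom with commutes' := fun _ => rfl }

def uliftUpAlg (R A : Type*) [CommSemiring R] [Semiring A] [Algebra R A] :
    A →ₐ[R] ULift A :=
  { (ULift.ringEquiv : ULift A ≃+* A).symm.toRingHom with commutes' := fun _ => rfl }

lemma isSymAlg_adjoin_eq_top {ι : Z →ₗ[𝕜] S} (hS : IsSymAlg S ι) :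
    Algebra.adjoin 𝕜 (Set.range ι) = ⊤ := by
  set A₀ : Subalgebra 𝕜 S := Algebra.adjoin 𝕜 (Set.range ι) with hA₀
  have hmem : ∀ z : Z, ι z ∈ A₀ := fun z => Algebra.subset_adjoin ⟨z, rfl⟩
  let g : Z →ₗ[𝕜] ULift.{max u v} A₀ :=
    (ULift.moduleEquiv (R := 𝕜) (M := A₀)).symm.toLinearMap.comp
      (ι.codRestrict (Subalgebra.toSubmodule A₀) hmem)
  obtain ⟨h, hh, -⟩ := hS (ULift.{max u v} A₀) g
  let j : ULift.{max u v} A₀ →ₐ[𝕜] S := A₀.val.comp (uliftDownAlg 𝕜 A₀)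
  obtain ⟨h₀, -, hu⟩ := hS (ULift.{max u v} S)
    ((ULift.moduleEquiv (R := 𝕜) (M := S)).symm.toLinearMap.comp ι)
  have e1 : (uliftUpAlg 𝕜 S).comp (j.comp h) = h₀ := by
    apply hu
    intro z
    simp only [AlgHom.coe_comp, Function.comp_apply, hh z]
    rfl
  have e2 : (uliftUpAlg 𝕜 S).comp (AlgHom.id 𝕜 S) = h₀ := by
    apply hu
    intro z
    rfl
  have e3 : ∀ s : S, j (h s) = s := by
    intro s
    have := congrArg (fun (f : S →ₐ[𝕜] ULift.{max u v} S) => (f s).down) (e1.trans e2.symm)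
    simpa [uliftUpAlg] using this
  apply le_antisymm le_top
  intro s _
  rw [← e3 s]
  exact ((uliftDownAlg 𝕜 A₀) (h s)).2

lemma derivation_like_eq_zero {ι : Z →ₗ[𝕜] S}
    (htop : Algebra.adjoin 𝕜 (Set.range ι) = ⊤)
    (D : S → S) (hadd : ∀ a b, D (a + b) = D a + D b)
    (hsmul : ∀ (c : 𝕜) a, D (c • a) = c • D a)
    (hmul : ∀ a b, D (a * b) = a * D b + b * D a)
    (hgen : ∀ z, D (ι z) = 0) : ∀ s, D s = 0 := by
  have h1 : D 1 = 0 := by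
    have h := hmul 1 1
    simp only [one_mul, mul_one] at h
    exact (left_eq_add.mp h)
  intro s
  have hs : s ∈ Algebra.adjoin 𝕜 (Set.range ι) := by rw [htop]; trivial
  induction hs using Algebra.adjoin_induction with
  | mem x hx => obtain ⟨z, rfl⟩ := hx; exact hgen z
  | algebraMap r =>
    rw [Algebra.algebraMap_eq_smul_one, hsmul, h1, smul_zero]
  | add a b ha hb iha ihb => rw [hadd, iha, ihb, add_zero]
  | mul a b ha hb iha ihb => rw [hmul, iha, ihb, mul_zero, zero_add, mul_zero]

end SymAux


section ExtSkew

variable {𝕜 : Type u} [Field 𝕜] {L : Type v} [AddCommGroup L] [Module 𝕜 L]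

lemma shSum_zero {α : Type*} {M : Type*} [AddCommGroup M] (r : ℕ) (l : List α) :
    shSum r l (fun _ _ => (0 : M)) = 0 := by
  rw [shSum_eq_shT]
  rw [shT_congr l _ (fun _ _ => (0 : M)) (fun l1 l2 _ => by simp)]
  exact shT_zero l

lemma isExt_skew (A : LeibnizAlg 𝕜 L) (S : Type w) [CommRing S] [Algebra 𝕜 S]
    (ι : A.leftCenter →ₗ[𝕜] S) (hS : IsSymAlg S ι)
    (n : ℕ) (ω : ℕ → List L → List A.leftCenter → S) (hω : IsCochain A S n ω)
    (ωc : ℕ → List L → S → List A.leftCenter → S) (hωc : IsExt A S ι n ω ωc)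
    (i : ℕ) (p' q' : List L) (x y : L) (fs : List A.leftCenter)
    (hlen : 2*(i+2) + (p'.length + q'.length) = n) (hfs : fs.length = i) :
    ∀ s : S, ωc i (p' ++ x :: y :: q') s fs + ωc i (p' ++ y :: x :: q') s fs
      = - ωc (i+1) (p' ++ q') s (A.spZ x y :: fs) := by
  have htop := isSymAlg_adjoin_eq_top hS
  have hl1 : 2*(i+1) + (p' ++ x :: y :: q').length = n := by simp; omega
  have hl2 : 2*(i+1) + (p' ++ y :: x :: q').length = n := by simp; omega
  have hl3 : 2*(i+1+1) + (p' ++ q').length = n := by simp; omega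
  have hfs3 : (A.spZ x y :: fs).length = i + 1 := by simp [hfs]
  set D : S → S := fun s => ωc i (p' ++ x :: y :: q') s fs
      + ωc i (p' ++ y :: x :: q') s fs
      + ωc (i+1) (p' ++ q') s (A.spZ x y :: fs) with hD
  have hz : ∀ s, D s = 0 := by
    apply derivation_like_eq_zero htop
    · intro a b
      simp only [hD]
      rw [hωc.map_add i _ fs a b hl1 hfs, hωc.map_add i _ fs a b hl2 hfs,
        hωc.map_add (i+1) _ (A.spZ x y :: fs) a b hl3 hfs3]
      abel
    · intro c a
      simp only [hD]
      rw [hωc.map_smul i _ fs c a hl1 hfs, hωc.map_smul i _ fs c a hl2 hfs,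
        hωc.map_smul (i+1) _ (A.spZ x y :: fs) c a hl3 hfs3, smul_add, smul_add]
    · intro a b
      simp only [hD]
      rw [hωc.mul_rule i _ fs a b hl1 hfs, hωc.mul_rule i _ fs a b hl2 hfs,
        hωc.mul_rule (i+1) _ (A.spZ x y :: fs) a b hl3 hfs3]
      ring
    · intro f
      simp only [hD]
      rw [hωc.on_gen i _ fs f hl1 hfs, hωc.on_gen i _ fs f hl2 hfs,
        hωc.on_gen (i+1) _ (A.spZ x y :: fs) f hl3 hfs3]
      rw [hω.skew (i+1) p' q' x y (f :: fs) (by omega) (by simp [hfs])]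
      have hsf := hω.symm_f (i+1+1) (p' ++ q') [] fs (A.spZ x y) f (by simp; omega)
        (by simp [hfs]; omega)
      simp only [List.nil_append] at hsf
      rw [hsf]
      simp
  intro s
  exact eq_neg_of_add_eq_zero_left (hz s)

end ExtSkew

section Theorems

variable {𝕜 : Type u} [Field 𝕜] {L : Type v} [AddCommGroup L] [Module 𝕜 L]

theorem cdiam_isCochain (A : LeibnizAlg 𝕜 L) (S : Type w) [CommRing S] [Algebra 𝕜 S]
    (ι : A.leftCenter →ₗ[𝕜] S) (hS : IsSymAlg S ι)
    (n m : ℕ) (ω η : ℕ → List L → List A.leftCenter → S)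
    (hω : IsCochain A S n ω) (hη : IsCochain A S m η)
    (ωc : ℕ → List L → S → List A.leftCenter → S) (hωc : IsExt A S ι n ω ωc) :
    ∀ (k : ℕ) (p q : List L) (x y : L) (fs : List A.leftCenter),
      2*k + (p.length + 2 + q.length) + 2 = n + m → fs.length = k →
      cdiam A S n m ωc η k (p ++ x :: y :: q) fs
        + cdiam A S n m ωc η k (p ++ y :: x :: q) fs
        = - cdiam A S n m ωc η (k+1) (p ++ q) (A.spZ x y :: fs) := by
  intro k p q x y fs hlen hfs
  have hik : ∀ i, i ∈ Finset.range (k+1) → i ≤ k := fun i hi => by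
    have := Finset.mem_range.mp hi; omega
  -- the two "reduced" summand families
  -- A i = ω-side (T1), B i = η-side (T2)
  have key : ∀ i ∈ Finset.range (k+1),
      ((if 2*(i+1) ≤ n ∧ 2*(k-i) ≤ m then
          shSum (n - 2*i - 2) (p ++ x :: y :: q) (fun es₁ es₂ =>
            shSumU (k-i) fs fun fs₁ fs₂ => ωc i es₁ (η (k-i) es₂ fs₁) fs₂) else 0)
        + (if 2*(i+1) ≤ n ∧ 2*(k-i) ≤ m then
          shSum (n - 2*i - 2) (p ++ y :: x :: q) (fun es₁ es₂ =>
            shSumU (k-i) fs fun fs₁ fs₂ => ωc i es₁ (η (k-i) es₂ fs₁) fs₂) else 0))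
      = -((if 2*(i+2) ≤ n ∧ 2*(k-i) ≤ m then
            shSum (n - 2*(i+1) - 2) (p ++ q) (fun l1 l2 =>
              shSumU (k-i) fs fun fs₁ fs₂ =>
                ωc (i+1) l1 (η (k-i) l2 fs₁) (A.spZ x y :: fs₂)) else 0)
          + (if 2*(i+1) ≤ n ∧ 2*(k-i)+2 ≤ m then
            shSum (n - 2*i - 2) (p ++ q) (fun l1 l2 =>
              shSumU (k-i) fs fun fs₁ fs₂ =>
                ωc i l1 (η (k-i+1) l2 (A.spZ x y :: fs₁)) fs₂) else 0)) := by
    intro i hi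
    have hik : i ≤ k := hik i hi
    by_cases hC : 2*(i+1) ≤ n ∧ 2*(k-i) ≤ m
    · obtain ⟨hCn, hCm⟩ := hC
      rw [if_pos ⟨hCn, hCm⟩, if_pos ⟨hCn, hCm⟩]
      rw [shSum_eq_shT, shSum_eq_shT]
      have h1 : ∀ p' q' l2 : List L,
          p'.length + q'.length + l2.length = p.length + q.length →
          (if (p' ++ x :: y :: q').length = n - 2*i - 2 then
            shSumU (k-i) fs (fun fs₁ fs₂ =>
              ωc i (p' ++ x :: y :: q') (η (k-i) l2 fs₁) fs₂) else 0)
          + (if (p' ++ y :: x :: q').length = n - 2*i - 2 then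
            shSumU (k-i) fs (fun fs₁ fs₂ =>
              ωc i (p' ++ y :: x :: q') (η (k-i) l2 fs₁) fs₂) else 0)
          = (if (p' ++ q').length + 2 = n - 2*i - 2 then
              -(shSumU (k-i) fs (fun fs₁ fs₂ =>
                ωc (i+1) (p' ++ q') (η (k-i) l2 fs₁) (A.spZ x y :: fs₂))) else 0) := by
        intro p' q' l2 hll
        by_cases hg : (p' ++ x :: y :: q').length = n - 2*i - 2
        · have hg2 : (p' ++ y :: x :: q').length = n - 2*i - 2 := by
            simp at hg ⊢; omega
          have hg3 : (p' ++ q').length + 2 = n - 2*i - 2 := by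
            simp at hg ⊢; omega
          rw [if_pos hg, if_pos hg2, if_pos hg3, ← shSumU_add, ← shSumU_neg]
          apply shSumU_congr
          intro fs₁ fs₂ hf1 hf2
          exact isExt_skew A S ι hS n ω hω ωc hωc i p' q' x y fs₂
            (by simp at hg; omega) (by rw [hfs] at hf2; omega) (η (k-i) l2 fs₁)
        · have hg2 : ¬ ((p' ++ y :: x :: q').length = n - 2*i - 2) := by
            simp at hg ⊢; omega
          have hg3 : ¬ ((p' ++ q').length + 2 = n - 2*i - 2) := by
            simp at hg ⊢; omega
          rw [if_neg hg, if_neg hg2, if_neg hg3, add_zero]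
      have h2 : ∀ l1 p' q' : List L,
          l1.length + p'.length + q'.length = p.length + q.length →
          (if l1.length = n - 2*i - 2 then
            shSumU (k-i) fs (fun fs₁ fs₂ =>
              ωc i l1 (η (k-i) (p' ++ x :: y :: q') fs₁) fs₂) else 0)
          + (if l1.length = n - 2*i - 2 then
            shSumU (k-i) fs (fun fs₁ fs₂ =>
              ωc i l1 (η (k-i) (p' ++ y :: x :: q') fs₁) fs₂) else 0)
          = (if l1.length = n - 2*i - 2 then
              -(shSumU (k-i) fs (fun fs₁ fs₂ =>
                ωc i l1 (η (k-i+1) (p' ++ q') (A.spZ x y :: fs₁)) fs₂)) else 0) := by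
        intro l1 p' q' hll
        by_cases hg : l1.length = n - 2*i - 2
        · rw [if_pos hg, if_pos hg, if_pos hg, ← shSumU_add, ← shSumU_neg]
          apply shSumU_congr
          intro fs₁ fs₂ hf1 hf2
          have hLn : 2*(i+1) + l1.length = n := by omega
          have hfs2 : fs₂.length = i := by rw [hfs] at hf2; omega
          have hsk := hη.skew (k-i) p' q' x y fs₁ (by omega) hf1
          calc ωc i l1 (η (k-i) (p' ++ x :: y :: q') fs₁) fs₂
                + ωc i l1 (η (k-i) (p' ++ y :: x :: q') fs₁) fs₂
              = ωc i l1 (η (k-i) (p' ++ x :: y :: q') fs₁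
                  + η (k-i) (p' ++ y :: x :: q') fs₁) fs₂ :=
                (hωc.map_add i l1 fs₂ _ _ hLn hfs2).symm
            _ = ωc i l1 (-(η (k-i+1) (p' ++ q') (A.spZ x y :: fs₁))) fs₂ := by rw [hsk]
            _ = -(ωc i l1 (η (k-i+1) (p' ++ q') (A.spZ x y :: fs₁)) fs₂) := by
                rw [← neg_one_smul 𝕜 (η (k-i+1) (p' ++ q') (A.spZ x y :: fs₁)),
                  hωc.map_smul i l1 fs₂ (-1) _ hLn hfs2, neg_one_smul]
        · rw [if_neg hg, if_neg hg, if_neg hg, add_zero]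
      rw [shT_swap x y p q
        (fun l1 l2 => if l1.length = n - 2*i - 2 then
          shSumU (k-i) fs (fun fs₁ fs₂ => ωc i l1 (η (k-i) l2 fs₁) fs₂) else 0)
        (fun l1 l2 => if l1.length + 2 = n - 2*i - 2 then
          -(shSumU (k-i) fs (fun fs₁ fs₂ =>
            ωc (i+1) l1 (η (k-i) l2 fs₁) (A.spZ x y :: fs₂))) else 0)
        (fun l1 l2 => if l1.length = n - 2*i - 2 then
          -(shSumU (k-i) fs (fun fs₁ fs₂ =>
            ωc i l1 (η (k-i+1) l2 (A.spZ x y :: fs₁)) fs₂)) else 0)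
        h1 h2]
      rw [neg_add]
      congr 1
      · -- ω-side
        by_cases hc : 2*(i+2) ≤ n
        · rw [if_pos ⟨hc, hCm⟩, shSum_eq_shT, ← shT_neg]
          apply shT_congr
          intro l1 l2 hl
          by_cases hgg : l1.length + 2 = n - 2*i - 2
          · rw [if_pos hgg, if_pos (by omega : l1.length = n - 2*(i+1) - 2)]
          · rw [if_neg hgg, if_neg (by omega : ¬ (l1.length = n - 2*(i+1) - 2)), neg_zero]
        · rw [if_neg (by omega : ¬ (2*(i+2) ≤ n ∧ 2*(k-i) ≤ m)), neg_zero]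
          rw [shT_congr (p++q) _ (fun _ _ => (0:S)) (fun l1 l2 hl => by
            rw [if_neg (by omega : ¬ (l1.length + 2 = n - 2*i - 2))])]
          exact shT_zero _
      · -- η-side
        by_cases hc : 2*(k-i)+2 ≤ m
        · rw [if_pos ⟨hCn, hc⟩, shSum_eq_shT, ← shT_neg]
          apply shT_congr
          intro l1 l2 hl
          by_cases hgg : l1.length = n - 2*i - 2
          · rw [if_pos hgg, if_pos hgg]
          · rw [if_neg hgg, if_neg hgg, neg_zero]
        · rw [if_neg (by omega : ¬ (2*(i+1) ≤ n ∧ 2*(k-i)+2 ≤ m)), neg_zero]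
          rw [shT_congr (p++q) _ (fun _ _ => (0:S)) (fun l1 l2 hl => by
            rw [if_neg (by simp at hlen hl ⊢; omega : ¬ (l1.length = n - 2*i - 2))])]
          exact shT_zero _
    · rw [if_neg hC, if_neg hC, if_neg (by omega : ¬ (2*(i+2) ≤ n ∧ 2*(k-i) ≤ m)),
        if_neg (by omega : ¬ (2*(i+1) ≤ n ∧ 2*(k-i)+2 ≤ m))]
      simp
  -- now assemble the sums
  unfold cdiam
  rw [← Finset.sum_add_distrib, Finset.sum_congr rfl key]
  rw [Finset.sum_neg_distrib]
  congr 1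
  rw [Finset.sum_add_distrib]
  -- split the RHS (k+1)-sum
  have hsplit : ∀ i' ∈ Finset.range (k+1+1),
      (if 2*(i'+1) ≤ n ∧ 2*(k+1-i') ≤ m then
        shSum (n - 2*i' - 2) (p ++ q) (fun es₁ es₂ =>
          shSumU (k+1-i') (A.spZ x y :: fs) fun fs₁ fs₂ =>
            ωc i' es₁ (η (k+1-i') es₂ fs₁) fs₂) else 0)
      = (if i' ≤ k then
          (if 2*(i'+1) ≤ n ∧ 2*(k-i')+2 ≤ m then
            shSum (n - 2*i' - 2) (p ++ q) (fun l1 l2 =>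
              shSumU (k-i') fs fun fs₁ fs₂ =>
                ωc i' l1 (η (k-i'+1) l2 (A.spZ x y :: fs₁)) fs₂) else 0) else 0)
        + (if 1 ≤ i' then
          (if 2*((i'-1)+2) ≤ n ∧ 2*(k-(i'-1)) ≤ m then
            shSum (n - 2*((i'-1)+1) - 2) (p ++ q) (fun l1 l2 =>
              shSumU (k-(i'-1)) fs fun fs₁ fs₂ =>
                ωc ((i'-1)+1) l1 (η (k-(i'-1)) l2 fs₁) (A.spZ x y :: fs₂)) else 0) else 0) := by
    intro i' hi'
    have hi'2 : i' < k + 2 := Finset.mem_range.mp hi'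
    rcases Nat.lt_or_ge i' (k+1) with hik' | hik'
    · -- i' ≤ k
      rw [if_pos (by omega : i' ≤ k)]
      by_cases hC' : 2*(i'+1) ≤ n ∧ 2*(k+1-i') ≤ m
      · rw [if_pos hC', if_pos ⟨hC'.1, by omega⟩]
        have hW : ∀ l1 l2 : List L,
            shSumU (k+1-i') (A.spZ x y :: fs) (fun fs₁ fs₂ =>
              ωc i' l1 (η (k+1-i') l2 fs₁) fs₂)
            = shSumU (k-i') fs (fun fs₁ fs₂ =>
                ωc i' l1 (η (k-i'+1) l2 (A.spZ x y :: fs₁)) fs₂)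
              + shSumU (k-i'+1) fs (fun fs₁ fs₂ =>
                ωc i' l1 (η (k-i'+1) l2 fs₁) (A.spZ x y :: fs₂)) := by
          intro l1 l2
          rw [show k+1-i' = (k-i') + 1 from by omega]
          exact shSumU_cons_succ (k-i') (A.spZ x y) fs _
        rw [shSum_congr _ _ _ _ (fun l1 l2 _ _ => hW l1 l2), shSum_add]
        congr 1
        by_cases h1i : 1 ≤ i'
        · rw [if_pos h1i, if_pos (by omega : 2*((i'-1)+2) ≤ n ∧ 2*(k-(i'-1)) ≤ m)]
          rw [show (i'-1)+1 = i' from by omega, show k-(i'-1) = k-i'+1 from by omega]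
        · rw [if_neg h1i]
          have h0 : i' = 0 := by omega
          subst h0
          rw [shSum_congr _ _ _ (fun _ _ => (0:S)) (fun l1 l2 _ _ =>
            shSumU_zero_of_gt _ _ _ (by rw [hfs]; omega)), shSum_zero]
      · rw [if_neg hC', if_neg (by omega : ¬ (2*(i'+1) ≤ n ∧ 2*(k-i')+2 ≤ m))]
        by_cases h1i : 1 ≤ i'
        · rw [if_pos h1i, if_neg (by omega : ¬ (2*((i'-1)+2) ≤ n ∧ 2*(k-(i'-1)) ≤ m))]
          simp
        · rw [if_neg h1i]; simp
    · -- i' = k+1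
      have h0 : i' = k + 1 := by omega
      subst h0
      rw [if_neg (by omega : ¬ (k+1 ≤ k)), if_pos (by omega : 1 ≤ k+1), zero_add]
      by_cases hC' : 2*(k+1+1) ≤ n ∧ 2*(k+1-(k+1)) ≤ m
      · rw [if_pos hC', if_pos (by omega : 2*((k+1-1)+2) ≤ n ∧ 2*(k-(k+1-1)) ≤ m)]
        rw [show k+1-1 = k from by omega, show (k+1-(k+1)) = 0 from by omega,
          show k - k = 0 from by omega]
        apply shSum_congr
        intro l1 l2 _ _
        rw [shSumU_cons_zero]
      · rw [if_neg hC', if_neg (by omega : ¬ (2*((k+1-1)+2) ≤ n ∧ 2*(k-(k+1-1)) ≤ m))]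
  rw [Finset.sum_congr rfl hsplit, Finset.sum_add_distrib]
  have e1 : (∑ i' ∈ Finset.range (k+1+1), if i' ≤ k then
      (if 2*(i'+1) ≤ n ∧ 2*(k-i')+2 ≤ m then
        shSum (n - 2*i' - 2) (p ++ q) (fun l1 l2 =>
          shSumU (k-i') fs fun fs₁ fs₂ =>
            ωc i' l1 (η (k-i'+1) l2 (A.spZ x y :: fs₁)) fs₂) else 0) else 0)
    = ∑ i ∈ Finset.range (k+1),
      (if 2*(i+1) ≤ n ∧ 2*(k-i)+2 ≤ m then
        shSum (n - 2*i - 2) (p ++ q) (fun l1 l2 =>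
          shSumU (k-i) fs fun fs₁ fs₂ =>
            ωc i l1 (η (k-i+1) l2 (A.spZ x y :: fs₁)) fs₂) else 0) := by
    rw [Finset.sum_range_succ, if_neg (by omega : ¬ (k+1 ≤ k)), add_zero]
    exact Finset.sum_congr rfl (fun i hi => if_pos (hik i hi))
  have e2 : (∑ i' ∈ Finset.range (k+1+1), if 1 ≤ i' then
      (if 2*((i'-1)+2) ≤ n ∧ 2*(k-(i'-1)) ≤ m then
        shSum (n - 2*((i'-1)+1) - 2) (p ++ q) (fun l1 l2 =>
          shSumU (k-(i'-1)) fs fun fs₁ fs₂ =>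
            ωc ((i'-1)+1) l1 (η (k-(i'-1)) l2 fs₁) (A.spZ x y :: fs₂)) else 0) else 0)
    = ∑ i ∈ Finset.range (k+1),
      (if 2*(i+2) ≤ n ∧ 2*(k-i) ≤ m then
        shSum (n - 2*(i+1) - 2) (p ++ q) (fun l1 l2 =>
          shSumU (k-i) fs fun fs₁ fs₂ =>
            ωc (i+1) l1 (η (k-i) l2 fs₁) (A.spZ x y :: fs₂)) else 0) := by
    rw [Finset.sum_range_succ', if_neg (by omega : ¬ (1 ≤ 0)), add_zero]
    refine Finset.sum_congr rfl (fun i hi => ?_)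
    rw [if_pos (by omega : 1 ≤ i+1), show i+1-1 = i from by omega,
      show i+2 = i+1+1 from by omega]
  rw [e1, e2]
  exact add_comm _ _


end Theorems
end
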